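/- Let f: ℝ → (−∞,+∞] be the negative logarithm: f(x) = −ln x for x > 0 and f(x) = +∞ for x ≤ 0. Then for every (x,x*) ∈ ℝ²: 𝒜_{∂f}(x,x*) = −√(−1 − 2xx*) if x > 0 and x* ≤ −1/(2x), and 𝒜_{∂f}(x,x*) = +∞ otherwise. -/

import Mathlib

noncomputable section
open scoped Classical

/-- The Fenchel conjugate of `g : ℝ → (-∞,+∞]`: `g*(y) = sup_x (xy - g(x))`. -/
def rconj (g : ℝ → EReal) : ℝ → EReal :=
  fun y => ⨆ x : ℝ, ((x * y : ℝ) : EReal) - g x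

/-- The Fenchel conjugate of `F : ℝ × ℝ → (-∞,+∞]`, as a function on `ℝ × ℝ` (dual pair
first): `F*(x*,x) = sup_{(y,y*)} (y x* + x y* - F(y,y*))`. -/
def rconj2 (F : ℝ × ℝ → EReal) : ℝ × ℝ → EReal :=
  fun p => ⨆ q : ℝ × ℝ, ((q.1 * p.1 + p.2 * q.2 : ℝ) : EReal) - F q

/-- The negative natural logarithm `f(x) = -ln x` for `x > 0`, `+∞` otherwise. -/
def negLog : ℝ → EReal :=
  fun x => if 0 < x then ((-Real.log x : ℝ) : EReal) else ⊤

/-- The subdifferential of `f : ℝ → (-∞,+∞]`. -/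
def rsubdiff (f : ℝ → EReal) : ℝ → Set ℝ :=
  fun x => {x' | ∀ y : ℝ, (((y - x) * x' : ℝ) : EReal) + f x ≤ f y}

/-- The Fitzpatrick function of a set-valued `A : ℝ ⇉ ℝ`:
`F_A(x,x*) = sup_{(y,y*) ∈ gra A} (x y* + y x* - y y*)`. -/
def rfitz (A : ℝ → Set ℝ) : ℝ × ℝ → EReal :=
  fun p => ⨆ q : ℝ × ℝ, ⨆ _ : q.2 ∈ A q.1,
    ((p.1 * q.2 + q.1 * p.2 - q.1 * q.2 : ℝ) : EReal)

/-- The Penot–Zălinescu function `𝒜_A(x,x*) = inf_{y*} (½F_A(x,x*+y*) + ½F_A*(x*-y*,x))`. -/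
def rpz (A : ℝ → Set ℝ) : ℝ × ℝ → EReal :=
  fun p => ⨅ y' : ℝ,
    ((1 / 2 : ℝ) : EReal) * rfitz A (p.1, p.2 + y')
      + ((1 / 2 : ℝ) : EReal) * rconj2 (rfitz A) (p.2 - y', p.1)

/-- The proximal-average based function
`ℬ_A(x,x*) = inf_{(y,y*)} (½F_A(x+y,x*+y*) + ½F_A*(x*-y*,x-y) + ½y² + ½y*²)`. -/
def rbw (A : ℝ → Set ℝ) : ℝ × ℝ → EReal :=
  fun p => ⨅ q : ℝ × ℝ,
    ((1 / 2 : ℝ) : EReal) * rfitz A (p.1 + q.1, p.2 + q.2)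
      + ((1 / 2 : ℝ) : EReal) * rconj2 (rfitz A) (p.2 - q.2, p.1 - q.1)
      + ((1 / 2 * q.1 ^ 2 + 1 / 2 * q.2 ^ 2 : ℝ) : EReal)

/-- `F` is autoconjugate (on `ℝ × ℝ`). -/
def rAutoconjugate (F : ℝ × ℝ → EReal) : Prop :=
  ∀ x x' : ℝ, rconj2 F (x', x) = F (x, x')

/-- `F` is a representer for `A : ℝ ⇉ ℝ`. -/
def rIsRepresenter (F : ℝ × ℝ → EReal) (A : ℝ → Set ℝ) : Prop :=
  ∀ x x' : ℝ, x' ∈ A x ↔ F (x, x') = ((x * x' : ℝ) : EReal)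

/-!
The subdifferential of `f = -log` is single-valued, `∂f(y) = {-1/y}` on `y > 0`, so the
Fitzpatrick function is `F(x, s) = sup_{y > 0} (1 - x/y + s y)`. By AM-GM this is
`1 - 2√(-xs)` when `x ≥ 0 ≥ s` and `+∞` otherwise, and a second AM-GM computation gives
`F*(t, x) = -1` when `x > 0` and `xt ≤ -1`, `+∞` otherwise. Hence the function minimised in
`𝒜(x, x*)` is `-√(-x(x* + y*))` on the interval `x* + 1/x ≤ y* ≤ -x*` and `+∞` off it; the
interval is nonempty exactly when `2xx* ≤ -1`, and the minimum sits at its left end.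
-/

open Filter Topology Set

namespace EReal

lemma eq_top_of_tendsto_atTop {α : Type*} {l : Filter α} [l.NeBot] {g : α → ℝ} {S : EReal}
    (hg : Tendsto g l atTop) (hS : ∀ᶠ a in l, (g a : EReal) ≤ S) : S = ⊤ := by
  refine (EReal.eq_top_iff_forall_lt S).2 fun r => ?_
  obtain ⟨a, hra, haS⟩ := ((hg.eventually_gt_atTop r).and hS).exists
  exact (EReal.coe_lt_coe_iff.2 hra).trans_le haS

lemma half_mul_ite_add_half_mul_ite (P Q : Prop) [Decidable P] [Decidable Q] (a b : ℝ) :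
    ((1 / 2 : ℝ) : EReal) * (if P then (a : EReal) else ⊤)
        + ((1 / 2 : ℝ) : EReal) * (if Q then (b : EReal) else ⊤)
      = if P ∧ Q then (((a + b) / 2 : ℝ) : EReal) else ⊤ := by
  have hhalf : ((1 / 2 : ℝ) : EReal) * ⊤ = ⊤ := EReal.coe_mul_top_of_pos (by norm_num)
  by_cases hP : P <;> by_cases hQ : Q <;> simp only [hP, hQ, if_true, if_false, and_true,
    and_false, hhalf, ← EReal.coe_mul, EReal.coe_add_top, EReal.top_add_coe, EReal.top_add_top]
  rw [← EReal.coe_add]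
  congr 1
  ring

end EReal

lemma two_mul_le_sq_div_add_sq_mul (a b : ℝ) {y : ℝ} (hy : 0 < y) :
    2 * a * b ≤ a ^ 2 / y + b ^ 2 * y := by
  rw [div_add' _ _ _ hy.ne', le_div_iff₀ hy]
  nlinarith [sq_nonneg (a - b * y)]

-- Unlike the minimiser `y = a / b`, this witness needs no case split on `a = 0` or `b = 0`.
lemma sq_div_add_sq_mul_le {a b ε : ℝ} (ha : 0 ≤ a) (hb : 0 ≤ b) (hε : 0 < ε) :
    a ^ 2 / ((a + ε) / (b + ε)) + b ^ 2 * ((a + ε) / (b + ε)) ≤ 2 * a * b + ε * (a + b) := by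
  have hA : a ^ 2 / (a + ε) ≤ a := by
    rw [div_le_iff₀ (by positivity)]; nlinarith
  have hB : b ^ 2 / (b + ε) ≤ b := by
    rw [div_le_iff₀ (by positivity)]; nlinarith
  have h1 : a ^ 2 / ((a + ε) / (b + ε)) = a ^ 2 / (a + ε) * (b + ε) := by
    rw [div_div_eq_mul_div, mul_div_right_comm]
  have h2 : b ^ 2 * ((a + ε) / (b + ε)) = b ^ 2 / (b + ε) * (a + ε) := by ring
  rw [h1, h2]
  nlinarith [mul_le_mul_of_nonneg_right hA (by positivity : 0 ≤ b + ε),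
    mul_le_mul_of_nonneg_right hB (by positivity : 0 ≤ a + ε)]

lemma rfitz_eq_iSup_of_mem_iff {A : ℝ → Set ℝ} {D : Set ℝ} {g : ℝ → ℝ}
    (hA : ∀ y y', y' ∈ A y ↔ y ∈ D ∧ y' = g y) (p : ℝ × ℝ) :
    rfitz A p = ⨆ y ∈ D, ((p.1 * g y + y * p.2 - y * g y : ℝ) : EReal) := by
  refine le_antisymm (iSup₂_le fun q hq => ?_) (iSup₂_le fun y hy => ?_)
  · obtain ⟨hD, hg⟩ := (hA _ _).1 hq
    rw [hg]
    exact le_iSup₂_of_le q.1 hD le_rfl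
  · exact le_iSup₂_of_le (y, g y) ((hA _ _).2 ⟨hy, rfl⟩) le_rfl

lemma mem_rsubdiff_negLog {x x' : ℝ} : x' ∈ rsubdiff negLog x ↔ x ∈ Ioi 0 ∧ x' = -x⁻¹ := by
  constructor
  · intro h
    have hx : 0 < x := by
      by_contra hx
      have h1 := h 1
      simp only [negLog, if_neg hx, if_pos one_pos, EReal.coe_add_top, top_le_iff,
        EReal.coe_ne_top] at h1
    refine ⟨hx, ?_⟩
    have hsupport : ∀ y : ℝ, 0 < y → (y - x) * x' - Real.log x ≤ -Real.log y := by
      intro y hy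
      have := h y
      simp only [negLog, if_pos hx, if_pos hy, ← EReal.coe_add, EReal.coe_le_coe_iff] at this
      linarith
    have hmin : IsLocalMin (fun y => -Real.log y - (y - x) * x') x := by
      filter_upwards [eventually_gt_nhds hx] with y hy
      simpa using hsupport y hy
    have hlog : HasDerivAt (fun y => -Real.log y) (-x⁻¹) x := (Real.hasDerivAt_log hx.ne').neg
    have hlin : HasDerivAt (fun y => (y - x) * x') x' x := by
      simpa using ((hasDerivAt_id x).sub_const x).mul_const x'
    have hderiv := hlog.sub hlin
    linarith [hmin.hasDerivAt_eq_zero hderiv]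
  · rintro ⟨hx : 0 < x, rfl⟩ y
    by_cases hy : 0 < y
    · simp only [negLog, if_pos hx, if_pos hy, ← EReal.coe_add,
        EReal.coe_le_coe_iff]
      have hlog := Real.log_le_sub_one_of_pos (div_pos hy hx)
      rw [Real.log_div hy.ne' hx.ne'] at hlog
      have : (y - x) * -x⁻¹ = 1 - y / x := by field_simp; ring
      linarith
    · simp [negLog, hy]

lemma exists_sq_neg_sq_of_nonneg_of_nonpos {x s : ℝ} (hx : 0 ≤ x) (hs : s ≤ 0) :
    ∃ a b : ℝ, 0 ≤ a ∧ 0 ≤ b ∧ x = a ^ 2 ∧ s = -b ^ 2 ∧ Real.sqrt (x * -s) = a * b :=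
  ⟨_, _, Real.sqrt_nonneg x, Real.sqrt_nonneg (-s), (Real.sq_sqrt hx).symm,
    by rw [Real.sq_sqrt (neg_nonneg.2 hs), neg_neg], Real.sqrt_mul hx _⟩

lemma rfitz_rsubdiff_negLog (x s : ℝ) :
    rfitz (rsubdiff negLog) (x, s) =
      if 0 ≤ x ∧ s ≤ 0 then ((1 - 2 * Real.sqrt (x * -s) : ℝ) : EReal) else ⊤ := by
  have hF : rfitz (rsubdiff negLog) (x, s) = ⨆ y ∈ Ioi 0, ((1 - x / y + y * s : ℝ) : EReal) := by
    rw [rfitz_eq_iSup_of_mem_iff (fun _ _ => mem_rsubdiff_negLog)]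
    refine iSup_congr fun y => iSup_congr fun (hy : 0 < y) => ?_
    congr 1
    field_simp
    ring
  have hle : ∀ y, 0 < y → ((1 - x / y + y * s : ℝ) : EReal) ≤ rfitz (rsubdiff negLog) (x, s) :=
    fun y hy => by rw [hF]; exact le_iSup₂_of_le y hy le_rfl
  split_ifs with h
  · obtain ⟨a, b, ha, hb, rfl, rfl, hab⟩ := exists_sq_neg_sq_of_nonneg_of_nonpos h.1 h.2
    rw [hab]
    refine le_antisymm ?_ ?_
    · rw [hF]
      refine iSup₂_le fun y (hy : 0 < y) => ?_
      rw [EReal.coe_le_coe_iff]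
      linarith [two_mul_le_sq_div_add_sq_mul a b hy]
    · have hlim : Tendsto (fun ε : ℝ => 1 - 2 * (a * b) - ε * (a + b)) (𝓝[>] 0)
          (𝓝 (1 - 2 * (a * b))) := by
        have hcont : Continuous fun ε : ℝ => 1 - 2 * (a * b) - ε * (a + b) := by fun_prop
        simpa using (hcont.tendsto 0).mono_left nhdsWithin_le_nhds
      refine le_of_tendsto (EReal.tendsto_coe.2 hlim) ?_
      filter_upwards [self_mem_nhdsWithin] with ε (hε : 0 < ε)
      refine le_trans ?_ (hle ((a + ε) / (b + ε)) (by positivity))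
      rw [EReal.coe_le_coe_iff]
      linarith [sq_div_add_sq_mul_le ha hb hε]
  · rcases not_and_or.1 h with hx | hs
    · have hlim : Tendsto (fun y => 1 - x / y + y * s) (𝓝[>] 0) atTop := by
        have h1 := tendsto_inv_nhdsGT_zero.const_mul_atTop (neg_pos.2 (not_le.1 hx))
        have h2 : Tendsto (fun y : ℝ => 1 + y * s) (𝓝[>] 0) (𝓝 (1 + 0 * s)) :=
          ((continuous_const.add (continuous_id.mul continuous_const)).tendsto 0).mono_left
            nhdsWithin_le_nhds
        exact (h1.atTop_add h2).congr fun y => by ring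
      exact EReal.eq_top_of_tendsto_atTop hlim
        (eventually_nhdsWithin_of_forall fun y hy => hle y hy)
    · have hlim : Tendsto (fun y => 1 - x / y + y * s) atTop atTop :=
        (tendsto_const_nhds.sub (tendsto_const_nhds.div_atTop tendsto_id)).add_atTop
          (tendsto_id.atTop_mul_const (not_le.1 hs))
      exact EReal.eq_top_of_tendsto_atTop hlim ((eventually_gt_atTop 0).mono hle)

lemma rconj2_rfitz_rsubdiff_negLog (t x : ℝ) :
    rconj2 (rfitz (rsubdiff negLog)) (t, x) =
      if 0 < x ∧ x * t ≤ -1 then ((-1 : ℝ) : EReal) else ⊤ := by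
  have hle : ∀ u v : ℝ, 0 ≤ u → 0 ≤ v →
      ((u ^ 2 * t - x * v ^ 2 - 1 + 2 * u * v : ℝ) : EReal)
        ≤ rconj2 (rfitz (rsubdiff negLog)) (t, x) := by
    intro u v hu hv
    refine le_iSup_of_le (u ^ 2, -v ^ 2) ?_
    rw [rfitz_rsubdiff_negLog, if_pos ⟨sq_nonneg u, by nlinarith⟩, neg_neg, ← mul_pow,
      Real.sqrt_sq (mul_nonneg hu hv), ← EReal.coe_sub, EReal.coe_le_coe_iff]
    linarith
  split_ifs with h
  · obtain ⟨hx, ht⟩ := h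
    refine le_antisymm (iSup_le fun ⟨y, y'⟩ => ?_) (by simpa using hle 0 0 le_rfl le_rfl)
    rw [rfitz_rsubdiff_negLog]
    split_ifs with hq
    · obtain ⟨a, b, -, -, rfl, rfl, hab⟩ := exists_sq_neg_sq_of_nonneg_of_nonpos hq.1 hq.2
      rw [hab, ← EReal.coe_sub, EReal.coe_le_coe_iff]
      -- times `x`, using `xt ≤ -1`: `a²(xt) - (xb)² + 2a(xb) ≤ -(a - xb)² ≤ 0`
      have hx_mul : x * (a ^ 2 * t + x * -b ^ 2 + 2 * (a * b)) ≤ 0 := by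
        nlinarith [mul_le_mul_of_nonneg_left ht (sq_nonneg a), sq_nonneg (a - x * b)]
      nlinarith [nonpos_of_mul_nonpos_right hx_mul hx]
    · rw [EReal.sub_top]
      exact bot_le
  · rcases le_or_gt x 0 with hx | hx
    · have hlim : Tendsto (fun B => 1 ^ 2 * t - x * B ^ 2 - 1 + 2 * 1 * B) atTop atTop := by
        refine tendsto_atTop_mono (fun B => ?_)
          ((tendsto_id.const_mul_atTop two_pos).atTop_add (tendsto_const_nhds (x := t - 1)))
        dsimp only [id]
        nlinarith [mul_nonneg (neg_nonneg.2 hx) (sq_nonneg B)]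
      exact EReal.eq_top_of_tendsto_atTop hlim
        ((eventually_ge_atTop 0).mono fun B hB => hle 1 B zero_le_one hB)
    · have hxt : 0 < x * t + 1 := by linarith [not_le.1 (not_and.1 h hx)]
      have hlim : Tendsto (fun B => (x * B) ^ 2 * t - x * B ^ 2 - 1 + 2 * (x * B) * B)
          atTop atTop := by
        refine (((tendsto_pow_atTop two_ne_zero).const_mul_atTop (mul_pos hx hxt)).atTop_add
          (tendsto_const_nhds (x := (-1 : ℝ)))).congr fun B => ?_
        ring
      exact EReal.eq_top_of_tendsto_atTop hlim
        ((eventually_ge_atTop 0).mono fun B hB => hle (x * B) B (by positivity) hB)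

lemma rpz_rsubdiff_negLog_eq_iInf (x x' : ℝ) :
    rpz (rsubdiff negLog) (x, x') = ⨅ y' : ℝ,
      if 0 < x ∧ x' + y' ≤ 0 ∧ x * (x' - y') ≤ -1
      then ((-Real.sqrt (x * -(x' + y')) : ℝ) : EReal) else ⊤ := by
  simp only [rpz, rfitz_rsubdiff_negLog, rconj2_rfitz_rsubdiff_negLog,
    EReal.half_mul_ite_add_half_mul_ite]
  refine iInf_congr fun y' => if_congr ?_ (congrArg _ (by ring)) rfl
  exact ⟨fun ⟨⟨_, h1⟩, h2, h3⟩ => ⟨h2, h1, h3⟩, fun ⟨h2, h1, h3⟩ => ⟨⟨h2.le, h1⟩, h2, h3⟩⟩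

/-- Remark 5.2. For the negative logarithm `f`,
`𝒜_{∂f}(x,x*) = -√(-1-2xx*)` if `x > 0` and `x* ≤ -1/(2x)`, and `+∞` otherwise. -/
theorem stmt14 :
    ∀ x x' : ℝ,
      rpz (rsubdiff negLog) (x, x')
        = if 0 < x ∧ x' ≤ -(1 / (2 * x))
          then ((-Real.sqrt (-1 - 2 * x * x') : ℝ) : EReal)
          else ⊤ := by
  intro x x'
  rw [rpz_rsubdiff_negLog_eq_iInf]
  have hcond : ∀ hx : 0 < x, x' ≤ -(1 / (2 * x)) ↔ 2 * x * x' ≤ -1 := fun hx => by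
    rw [le_neg, div_le_iff₀ (by positivity)]
    constructor <;> intro h <;> nlinarith
  split_ifs with h
  · obtain ⟨hx, hx'⟩ := h
    have hxx' := (hcond hx).1 hx'
    refine le_antisymm (iInf_le_of_le (x' + 1 / x) ?_) (le_iInf fun y' => ?_)
    · have hinv : x * (1 / x) = 1 := by field_simp
      rw [if_pos ⟨hx, by nlinarith, by nlinarith⟩]
      have harg : x * -(x' + (x' + 1 / x)) = -1 - 2 * x * x' := by nlinarith
      rw [harg]
    · split_ifs with hy
      · obtain ⟨-, -, h2⟩ := hy
        rw [EReal.coe_le_coe_iff, neg_le_neg_iff]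
        exact Real.sqrt_le_sqrt (by nlinarith)
      · exact le_top
  · refine iInf_eq_top.2 fun y' => if_neg ?_
    rintro ⟨hx, h1, h2⟩
    exact h ⟨hx, (hcond hx).2 (by nlinarith)⟩
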